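/- Let x be a decision node and i a buyer. (i) If κ_i(x) < t then κ_i(x + e_{−i}) = κ_i(x). (ii) If t > 1 then κ_i(x + e_i) ≥ κ_i(x) − 1. (iii) If t > 1 and κ_i(x) = t then κ_i(x + e_i) = t − 1. -/

import Mathlib

open Finset

noncomputable section

/-- The opponent of buyer `i`. -/
def other (i : Fin 2) : Fin 2 := 1 - i

/-- The standard unit vector of buyer `i`: winning one item moves `x` to `x + e i`. -/
def e (i : Fin 2) : Fin 2 → ℕ := Pi.single i 1

/-- Remaining supply `t(x) = T - x₁ - x₂` at node `x`. -/
def supply (T : ℕ) (x : Fin 2 → ℕ) : ℕ := T - (x 0 + x 1)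

/-- `x` is a decision node: `x₁ + x₂ < T`. -/
def IsDecision (T : ℕ) (x : Fin 2 → ℕ) : Prop := x 0 + x 1 < T

/-- Incremental value `v_i(k|x) = v_i(x_i + k)`. -/
def val (v : Fin 2 → ℕ → ℝ) (i : Fin 2) (k : ℕ) (x : Fin 2 → ℕ) : ℝ := v i (x i + k)

/-- Valuations are nonnegative and weakly decreasing. -/
def Admissible (v : Fin 2 → ℕ → ℝ) : Prop := ∀ i k, 0 ≤ v i k ∧ v i (k + 1) ≤ v i k

/-- Greedy payoff `μ̄_i(k|x) = Σ_{j=1}^k v_i(j|x) - k · v_{-i}(t-k+1|x)`. -/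
def gbar (T : ℕ) (v : Fin 2 → ℕ → ℝ) (i : Fin 2) (k : ℕ) (x : Fin 2 → ℕ) : ℝ :=
  (∑ j ∈ Finset.Icc 1 k, val v i j x) - (k : ℝ) * val v (other i) (supply T x - k + 1) x

/-- Greedy utility `μ_i(x) = max_{0 ≤ k ≤ t} μ̄_i(k|x)` (equal to `0` at terminal nodes). -/
def gu (T : ℕ) (v : Fin 2 → ℕ → ℝ) (i : Fin 2) (x : Fin 2 → ℕ) : ℝ :=
  Finset.sup' (Finset.range (supply T x + 1)) Finset.nonempty_range_add_one
    (fun k => gbar T v i k x)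

/-- Greedy demand `κ_i(x)`: the least `k ∈ {0,…,t}` attaining the greedy utility. -/
def gd (T : ℕ) (v : Fin 2 → ℕ → ℝ) (i : Fin 2) (x : Fin 2 → ℕ) : ℕ :=
  sInf {k | k ≤ supply T x ∧ gbar T v i k x = gu T v i x}

/-- Duopsony factor `f_i(x) = max ({k ∈ {1,…,t} : v_i(k|x) > v_{-i}(t-k+1|x)} ∪ {0})`. -/
def df (T : ℕ) (v : Fin 2 → ℕ → ℝ) (i : Fin 2) (x : Fin 2 → ℕ) : ℕ :=
  sSup {k | 1 ≤ k ∧ k ≤ supply T x ∧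
    val v (other i) (supply T x - k + 1) x < val v i k x}

/-- Baseline price `β_i(x)`. -/
def base (T : ℕ) (v : Fin 2 → ℕ → ℝ) (i : Fin 2) (x : Fin 2 → ℕ) : ℝ :=
  if df T v i x = 0 then val v i 1 x
  else val v (other i) (supply T x - gd T v i x + 1) x

/-- Threshold price `p_i(x) = v_i(1|x) + μ_i(x+e_i) - μ_i(x+e_{-i})`. -/
def tp (T : ℕ) (v : Fin 2 → ℕ → ℝ) (i : Fin 2) (x : Fin 2 → ℕ) : ℝ :=
  val v i 1 x + gu T v i (x + e i) - gu T v i (x + e (other i))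

lemma Admissible.antitone {v : Fin 2 → ℕ → ℝ} (hv : Admissible v) (j : Fin 2) :
    Antitone (v j) :=
  antitone_nat_of_succ_le fun k => (hv j k).2

lemma other_ne_self (i : Fin 2) : other i ≠ i := by
  fin_cases i <;> decide

lemma supply_add_e (T : ℕ) (x : Fin 2 → ℕ) (j : Fin 2) :
    supply T (x + e j) = supply T x - 1 := by
  have h : e j 0 + e j 1 = 1 := by fin_cases j <;> simp [e]
  simp only [supply, Pi.add_apply]
  omega

lemma val_add_e_self (v : Fin 2 → ℕ → ℝ) (j : Fin 2) (k : ℕ) (x : Fin 2 → ℕ) :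
    val v j k (x + e j) = val v j (k + 1) x := by
  simp only [_root_.val, e, Pi.add_apply, Pi.single_eq_same, add_right_comm, add_assoc]

lemma val_add_e_of_ne (v : Fin 2 → ℕ → ℝ) {j l : Fin 2} (h : j ≠ l) (k : ℕ) (x : Fin 2 → ℕ) :
    val v j k (x + e l) = val v j k x := by
  simp [_root_.val, e, Pi.single_eq_of_ne h]

lemma sum_Icc_one_add_one (f : ℕ → ℝ) (k : ℕ) :
    ∑ j ∈ Icc 1 k, f (j + 1) = ∑ j ∈ Icc 1 (k + 1), f j - f 1 := by
  rw [eq_sub_iff_add_eq, add_comm, ← add_sum_Ioc_eq_sum_Icc (a := 1) (b := k + 1) (by omega),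
    ← Icc_add_one_left_eq_Ioc, ← map_add_right_Icc 1 k 1, sum_map]
  rfl

/-- For `k < t`, the opponent's win only shifts the opponent's price index, which the
smaller supply compensates exactly. -/
lemma gbar_add_e_other (T : ℕ) (v : Fin 2 → ℕ → ℝ) (i : Fin 2) {k : ℕ} (x : Fin 2 → ℕ)
    (hk : k < supply T x) :
    gbar T v i k (x + e (other i)) = gbar T v i k x := by
  simp only [gbar, supply_add_e, val_add_e_self, val_add_e_of_ne v (other_ne_self i).symm]
  congr 3
  omega

lemma gbar_add_e_self (T : ℕ) (v : Fin 2 → ℕ → ℝ) (i : Fin 2) {k : ℕ} (x : Fin 2 → ℕ)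
    (hk : k < supply T x) :
    gbar T v i k (x + e i) =
      gbar T v i (k + 1) x - val v i 1 x + val v (other i) (supply T x - k) x := by
  simp only [gbar, supply_add_e, val_add_e_self, val_add_e_of_ne v (other_ne_self i)]
  rw [sum_Icc_one_add_one (val v i · x), show supply T x - 1 - k + 1 = supply T x - k by omega,
    show supply T x - (k + 1) + 1 = supply T x - k by omega]
  push_cast
  ring

lemma gd_le_supply_and_gbar_gd_eq_gu (T : ℕ) (v : Fin 2 → ℕ → ℝ) (i : Fin 2)
    (x : Fin 2 → ℕ) :
    gd T v i x ≤ supply T x ∧ gbar T v i (gd T v i x) x = gu T v i x := by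
  obtain ⟨k, hk, hk_eq⟩ := exists_mem_eq_sup' nonempty_range_add_one (gbar T v i · x)
  exact Nat.sInf_mem (s := {k | k ≤ supply T x ∧ gbar T v i k x = gu T v i x})
    ⟨k, mem_range_succ_iff.mp hk, hk_eq.symm⟩

lemma gd_eq_iff (T : ℕ) (v : Fin 2 → ℕ → ℝ) (i : Fin 2) (x : Fin 2 → ℕ) (n : ℕ) :
    gd T v i x = n ↔ n ≤ supply T x ∧
      (∀ k ≤ supply T x, gbar T v i k x ≤ gbar T v i n x) ∧
      (∀ k < n, gbar T v i k x < gbar T v i n x) := by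
  have gbar_le_gu : ∀ k ≤ supply T x, gbar T v i k x ≤ gu T v i x := fun k hk =>
    le_sup' (gbar T v i · x) (mem_range_succ_iff.mpr hk)
  constructor
  · rintro rfl
    obtain ⟨hle, heq⟩ := gd_le_supply_and_gbar_gd_eq_gu T v i x
    refine ⟨hle, fun k hk => heq ▸ gbar_le_gu k hk, fun k hk => ?_⟩
    refine heq ▸ (gbar_le_gu k (by omega)).lt_of_ne fun hk_eq => ?_
    exact Nat.notMem_of_lt_sInf hk ⟨by omega, hk_eq⟩
  · rintro ⟨hle, hmax, hleast⟩
    have hgu : gbar T v i n x = gu T v i x :=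
      le_antisymm (gbar_le_gu n hle) (sup'_le _ _ fun k hk => hmax k (mem_range_succ_iff.mp hk))
    refine IsLeast.csInf_eq ⟨⟨hle, hgu⟩, fun k ⟨_, hk_eq⟩ => ?_⟩
    by_contra! hk
    exact (hleast k hk).ne (hk_eq.trans hgu.symm)

lemma gd_add_e_other (T : ℕ) (v : Fin 2 → ℕ → ℝ) (i : Fin 2) (x : Fin 2 → ℕ)
    (h : gd T v i x < supply T x) :
    gd T v i (x + e (other i)) = gd T v i x := by
  obtain ⟨-, hmax, hleast⟩ := (gd_eq_iff T v i x _).1 rfl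
  refine (gd_eq_iff T v i _ _).2 ⟨by rw [supply_add_e]; omega, fun k hk => ?_, fun k hk => ?_⟩
  · rw [supply_add_e] at hk
    rw [gbar_add_e_other T v i x h, gbar_add_e_other T v i x (by omega)]
    exact hmax k (by omega)
  · rw [gbar_add_e_other T v i x h, gbar_add_e_other T v i x (by omega)]
    exact hleast k hk

/-- If `κ_i(x+e_i) + 1 < κ_i(x)`, comparing `κ_i(x+e_i) + 1` with `κ_i(x)` at `x` and
`κ_i(x) - 1` with `κ_i(x+e_i)` at `x + e_i` gives opposite strict and weak inequalities,
because the opponent's price `v_{-i}(t-k|x)` is weakly increasing in `k`. -/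
lemma gd_sub_one_le_gd_add_e_self (T : ℕ) {v : Fin 2 → ℕ → ℝ} (i : Fin 2)
    (hv : Antitone (v (other i))) (x : Fin 2 → ℕ) :
    gd T v i x - 1 ≤ gd T v i (x + e i) := by
  set κ := gd T v i x
  set κ' := gd T v i (x + e i)
  by_contra! h
  obtain ⟨hκ, -, hleast⟩ := (gd_eq_iff T v i x κ).1 rfl
  obtain ⟨-, hmax', -⟩ := (gd_eq_iff T v i (x + e i) κ').1 rfl
  rw [supply_add_e] at hmax'
  have hlt : gbar T v i (κ' + 1) x < gbar T v i κ x := hleast _ (by omega)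
  have hle := hmax' (κ - 1) (by omega)
  rw [gbar_add_e_self T v i x (by omega), gbar_add_e_self T v i x (by omega),
    Nat.sub_add_cancel (by omega)] at hle
  have hprice : val v (other i) (supply T x - κ') x ≤ val v (other i) (supply T x - (κ - 1)) x :=
    hv (by omega)
  linarith

theorem stmt4_general (T : ℕ) (v : Fin 2 → ℕ → ℝ) (hv : Admissible v)
    (x : Fin 2 → ℕ) (i : Fin 2) :
    (gd T v i x < supply T x → gd T v i (x + e (other i)) = gd T v i x) ∧
    (1 < supply T x → gd T v i (x + e i) ≥ gd T v i x - 1) ∧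
    (1 < supply T x → gd T v i x = supply T x →
      gd T v i (x + e i) = supply T x - 1) := by
  have hdrop := gd_sub_one_le_gd_add_e_self T i (hv.antitone (other i)) x
  refine ⟨gd_add_e_other T v i x, fun _ => hdrop, fun _ hκ => ?_⟩
  have hle := (gd_le_supply_and_gbar_gd_eq_gu T v i (x + e i)).1
  rw [supply_add_e] at hle
  omega

/-- Evolution of the greedy demand. -/
theorem stmt4 (T : ℕ) (v : Fin 2 → ℕ → ℝ) (hv : Admissible v)
    (x : Fin 2 → ℕ) (hx : IsDecision T x) (i : Fin 2) :
    (gd T v i x < supply T x → gd T v i (x + e (other i)) = gd T v i x) ∧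
    (1 < supply T x → gd T v i (x + e i) ≥ gd T v i x - 1) ∧
    (1 < supply T x → gd T v i x = supply T x →
      gd T v i (x + e i) = supply T x - 1) :=
  stmt4_general T v hv x i
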